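/- arXiv:1101.4604 — 4 statements merged into one kernel-verified Lean document; each statement's English description precedes it below -/
import Mathlib

section
/- Let M be a finitely generated graded Cohen–Macaulay module over a polynomial ring S = k[x_1,...,x_m] over a field k, with a pure minimal free resolution of type (d_0, d_1, ..., d_c) where c = codim M, i.e., the i-th free module in the resolution is S(-d_i)^{β_i}. Then the multiplicity of M satisfies e(M) = (β_0 / c!) · ∏_{i=1}^{c} (d_i - d_0). -/
/-!
Write `K = ∑ wᵢ X^{aᵢ} = (X - 1)^c Q` and consider the functional `L p = ∑ wᵢ p(aᵢ)`. Since the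
`j`-th derivative of `X^a` at `1` is the falling factorial `a(a-1)⋯(a-j+1)`, `L` sends the
falling-factorial polynomial of degree `j` to `K⁽ʲ⁾(1)`, which is `0` for `j < c` and `c! Q(1)` for
`j = c`. The falling factorials being a basis, `L` takes the value `c! Q(1)` on every monic
polynomial of degree `c`; on `∏_{i ≠ 0} (X - aᵢ)` it is `w₀ ∏_{i ≠ 0} (a₀ - aᵢ)`.
-/

open Polynomial Finset
open scoped Nat

namespace Polynomial

variable {R : Type*} [CommRing R]

theorem eval_one_iterate_derivative_X_pow (j a : ℕ) :
    (derivative^[j] (X ^ a : R[X])).eval 1 = (descPochhammer R j).eval (a : R) := by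
  rw [iterate_derivative_X_pow_eq_smul, eval_smul, eval_pow, eval_X, one_pow, smul_eq_mul,
    mul_one, descPochhammer_eval_eq_descFactorial]

theorem eval_iterate_derivative_X_sub_C_pow_mul (n : ℕ) (t : R) (q : R[X]) :
    (derivative^[n] ((X - C t) ^ n * q)).eval t = n ! * q.eval t := by
  rw [iterate_derivative_mul, eval_finsetSum, Finset.sum_eq_single 0]
  · simp [iterate_derivative_X_sub_pow_self]
  · intro k hk hk0
    have hkn : k ≤ n := by simpa [Nat.lt_succ_iff] using hk
    rw [eval_smul, eval_mul, iterate_derivative_X_sub_pow, Nat.sub_sub_self hkn]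
    simp [zero_pow hk0]
  · simp

theorem degree_sub_descPochhammer_lt [IsDomain R] {p : R[X]} (hp : p.Monic) :
    (p - descPochhammer R p.natDegree).degree < p.natDegree := by
  have hd := monic_descPochhammer R p.natDegree
  refine (degree_sub_lt_left ?_ hp.ne_zero ?_).trans_le degree_le_natDegree
  · rw [degree_eq_natDegree hp.ne_zero, degree_eq_natDegree hd.ne_zero, descPochhammer_natDegree]
  · rw [hp.leadingCoeff, hd.leadingCoeff]

noncomputable def descPochhammerSequence [IsDomain R] : Sequence R where
  elems' := descPochhammer R
  degree_eq' i := by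
    rw [degree_eq_natDegree (monic_descPochhammer R i).ne_zero, descPochhammer_natDegree]

variable {ι : Type*} [Fintype ι]

noncomputable def weightedEval (w : ι → R) (a : ι → ℕ) : R[X] →ₗ[R] R :=
  ∑ i, w i • leval (a i : R)

theorem weightedEval_apply (w : ι → R) (a : ι → ℕ) (p : R[X]) :
    weightedEval w a p = ∑ i, w i * p.eval (a i : R) := by
  simp [weightedEval]

theorem weightedEval_descPochhammer (w : ι → R) (a : ι → ℕ) (j : ℕ) :
    weightedEval w a (descPochhammer R j) =
      (derivative^[j] (∑ i, C (w i) * X ^ a i)).eval 1 := by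
  simp only [weightedEval_apply, iterate_derivative_sum, iterate_derivative_C_mul, eval_finsetSum,
    eval_mul, eval_C, eval_one_iterate_derivative_X_pow]

theorem weightedEval_eq_zero_of_degree_lt [IsDomain R] {w : ι → R} {a : ι → ℕ} {c : ℕ}
    (h : (X - 1) ^ c ∣ ∑ i, C (w i) * X ^ a i) {p : R[X]} (hp : p.degree < c) :
    weightedEval w a p = 0 := by
  have hspan := (descPochhammerSequence (R := R)).span_degreeLT (m := c)
    fun i _ => by simp [descPochhammerSequence, (monic_descPochhammer R i).leadingCoeff]
  suffices degreeLT R c ≤ LinearMap.ker (weightedEval w a) from this (mem_degreeLT.mpr hp)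
  rw [← hspan, Submodule.span_le]
  rintro _ ⟨j, hj, rfl⟩
  have hdvd : X - C 1 ∣ derivative^[j] (∑ i, C (w i) * X ^ a i) :=
    (dvd_pow_self _ (Nat.sub_ne_zero_of_lt hj)).trans
      (pow_sub_dvd_iterate_derivative_of_pow_dvd j (by rwa [C_1]))
  simpa [descPochhammerSequence, weightedEval_descPochhammer] using dvd_iff_isRoot.mp hdvd

theorem weightedEval_monic_eq [IsDomain R] {w : ι → R} {a : ι → ℕ} {c : ℕ} {Q : R[X]}
    (h : ∑ i, C (w i) * X ^ a i = (X - 1) ^ c * Q) {p : R[X]} (hp : p.Monic)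
    (hpc : p.natDegree = c) : weightedEval w a p = c ! * Q.eval 1 := by
  have hlow := weightedEval_eq_zero_of_degree_lt (h ▸ dvd_mul_right _ _)
    (hpc ▸ degree_sub_descPochhammer_lt hp)
  rw [map_sub, sub_eq_zero] at hlow
  rw [hlow, weightedEval_descPochhammer, h, ← C_1, eval_iterate_derivative_X_sub_C_pow_mul]

theorem weight_mul_prod_sub_eq_factorial_mul_eval_one [IsDomain R] [DecidableEq ι]
    {w : ι → R} {a : ι → ℕ} {c : ℕ} {Q : R[X]}
    (h : ∑ i, C (w i) * X ^ a i = (X - 1) ^ c * Q) (hι : Fintype.card ι = c + 1) (i₀ : ι) :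
    w i₀ * ∏ i ∈ univ.erase i₀, ((a i₀ : R) - a i) = c ! * Q.eval 1 := by
  set P : R[X] := ∏ i ∈ univ.erase i₀, (X - C (a i : R))
  have hP : P.Monic := monic_prod_of_monic _ _ fun i _ => monic_X_sub_C _
  have hPdeg : P.natDegree = c := by
    rw [natDegree_prod_of_monic _ _ fun i _ => monic_X_sub_C _]
    simp only [natDegree_X_sub_C, sum_const, smul_eq_mul, mul_one, card_erase_of_mem (mem_univ i₀),
      Finset.card_univ, hι, Nat.add_sub_cancel]
  rw [← weightedEval_monic_eq h hP hPdeg, weightedEval_apply, Finset.sum_eq_single i₀]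
  · simp [P, eval_prod]
  · intro i _ hi
    rw [eval_prod, prod_eq_zero (mem_erase.mpr ⟨hi, mem_univ i⟩) (by simp), mul_zero]
  · simp

end Polynomial

theorem stmt_3_general (c : ℕ) (d : Fin (c + 1) → ℤ) (hd : StrictMono d)
    (β : Fin (c + 1) → ℕ)
    (Q : Polynomial ℚ)
    (hQ : (∑ i : Fin (c + 1), ((-1 : Polynomial ℚ) ^ (i : ℕ) * (β i : Polynomial ℚ) *
        Polynomial.X ^ (d i - d 0).toNat)) = (1 - Polynomial.X) ^ c * Q) :
    Q.eval 1 = (β 0 : ℚ) / (Nat.factorial c : ℚ) *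
      ∏ i ∈ Finset.univ.filter (fun i => i ≠ 0), ((d i : ℚ) - (d 0 : ℚ)) := by
  set a : Fin (c + 1) → ℕ := fun i => (d i - d 0).toNat
  have ha : ∀ i, (a i : ℚ) = d i - d 0 := fun i => by
    exact_mod_cast Int.toNat_of_nonneg (sub_nonneg.mpr (hd.monotone (Fin.zero_le i)))
  have hK : ∑ i : Fin (c + 1), C ((-1) ^ (i : ℕ) * (β i : ℚ)) * X ^ a i =
      (X - 1) ^ c * (C ((-1) ^ c) * Q) := by
    have hsign : (X - 1 : ℚ[X]) ^ c * C ((-1) ^ c) = (1 - X) ^ c := by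
      rw [map_pow, map_neg, map_one, ← mul_pow, mul_neg_one, neg_sub]
    rw [← mul_assoc, hsign, ← hQ]
    simp [a]
  have hL := weight_mul_prod_sub_eq_factorial_mul_eval_one hK (Fintype.card_fin _) 0
  simp only [eval_mul, eval_C, Fin.val_zero, pow_zero, one_mul, ha, sub_self, zero_sub, prod_neg,
    card_erase_of_mem (mem_univ _), Finset.card_univ, Fintype.card_fin, Nat.add_sub_cancel] at hL
  have hβd : (β 0 : ℚ) * ∏ i ∈ univ.erase 0, ((d i : ℚ) - d 0) = c ! * Q.eval 1 :=
    mul_left_cancel₀ (pow_ne_zero c (neg_ne_zero.mpr one_ne_zero)) (by linear_combination hL)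
  rw [filter_ne', div_mul_eq_mul_div, eq_div_iff (Nat.cast_ne_zero.mpr c.factorial_ne_zero)]
  linear_combination -hβd

/-- Huneke–Miller formula for modules: Let `M` be a graded Cohen–Macaulay module
with a pure resolution of type `(d_0, ..., d_c)`, `c = codim M`, with Betti numbers `β_i > 0`.
The numerical data of the resolution is encoded by the numerator of the Hilbert series of `M`,
`K(t) = Σ_i (-1)^i β_i t^{d_i - d_0}` (normalized by the shift `d_0`), which, since `M` is
Cohen–Macaulay of codimension `c`, is divisible by `(1-t)^c`; the multiplicity of `M` is the
value `e(M) = Q(1)` of the quotient `Q = K/(1-t)^c` at `t = 1`.  The theorem asserts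
`e(M) = (β_0 / c!) · ∏_{i=1}^c (d_i - d_0)`. -/
theorem stmt_3 (c : ℕ) (d : Fin (c + 1) → ℤ) (hd : StrictMono d)
    (β : Fin (c + 1) → ℕ) (hβ : ∀ i, 0 < β i)
    (Q : Polynomial ℚ)
    (hQ : (∑ i : Fin (c + 1), ((-1 : Polynomial ℚ) ^ (i : ℕ) * (β i : Polynomial ℚ) *
        Polynomial.X ^ (d i - d 0).toNat)) = (1 - Polynomial.X) ^ c * Q) :
    Q.eval 1 = (β 0 : ℚ) / (Nat.factorial c : ℚ) *
      ∏ i ∈ Finset.univ.filter (fun i => i ≠ 0), ((d i : ℚ) - (d 0 : ℚ)) :=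
  stmt_3_general c d hd β Q hQ
end

section
/- Let F_• : 0 → F_c → ... → F_1 → F_0 be a pure free resolution of a Cohen–Macaulay module of type (d_0, ..., d_c) with ranks β_i. Then for each i, β_i = β_0 · ∏_{j≠i, j≥1} |d_j - d_0| / ∏_{j≠i, j≥1} |d_j - d_i| — that is, the Betti numbers of a pure resolution of a Cohen–Macaulay module are determined up to simultaneous scalar by the degree sequence via the Herzog–Kühl equations Σ_i (-1)^i d_i^k β_i = 0 for 0 ≤ k < c. -/
/-!
Plug the polynomial `P = ∏_{j ≠ 0, i} (X - d_j)` of degree `c - 1` into the Herzog–Kühl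
equations: by linearity `Σ_m (-1)^m β_m P(d_m) = 0`, and only the terms `m = 0` and `m = i`
survive, so `β_0 |P(d_0)| = β_i |P(d_i)|`.
-/

open Polynomial Finset

section PowerSums

variable {ι R : Type*} [Fintype ι] [CommRing R]

theorem sum_mul_eval_eq_zero_of_sum_mul_pow_eq_zero {n : ℕ} (w x : ι → R)
    (hw : ∀ k < n, ∑ m, w m * x m ^ k = 0) {P : R[X]} (hP : P.natDegree < n) :
    ∑ m, w m * P.eval (x m) = 0 := by
  simp_rw [eval_eq_sum_range' hP, mul_sum]
  rw [sum_comm]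
  refine sum_eq_zero fun k hk => ?_
  simp_rw [mul_left_comm (w _), ← mul_sum, hw k (mem_range.mp hk), mul_zero]

variable [DecidableEq ι] [Nontrivial R]

theorem mul_prod_sub_add_mul_prod_sub_eq_zero (w x : ι → R)
    (hw : ∀ k < Fintype.card ι - 1, ∑ m, w m * x m ^ k = 0) {a b : ι} (hab : a ≠ b) :
    w a * ∏ j ∈ univ.filter (fun j => j ≠ a ∧ j ≠ b), (x a - x j) +
      w b * ∏ j ∈ univ.filter (fun j => j ≠ a ∧ j ≠ b), (x b - x j) = 0 := by
  set s := univ.filter (fun j => j ≠ a ∧ j ≠ b)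
  have hs : s = {a, b}ᶜ := by ext j; simp [s]
  have hdeg : (∏ j ∈ s, (X - C (x j))).natDegree < Fintype.card ι - 1 := by
    have : 2 ≤ Fintype.card ι := by
      simpa [card_pair hab] using card_le_univ ({a, b} : Finset ι)
    rw [natDegree_finsetProd_X_sub_C_eq_card, hs, card_compl, card_pair hab]
    omega
  have h := sum_mul_eval_eq_zero_of_sum_mul_pow_eq_zero w x hw hdeg
  simp only [eval_prod, eval_sub, eval_X, eval_C] at h
  rwa [Fintype.sum_eq_add a b hab fun m hm =>
    by rw [prod_eq_zero (by simpa [s] using hm) (sub_self _), mul_zero]] at h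

end PowerSums

/-- the Betti numbers of a pure resolution of a Cohen–Macaulay module of
codimension `c`, of type `d_0 < d_1 < ... < d_c`, satisfy the Herzog–Kühl equations
`Σ_i (-1)^i β_i d_i^k = 0` for `0 ≤ k < c`; these determine the `β_i` up to simultaneous
scalar: `β_i = β_0 · ∏_{j≠i, j≥1} |d_j - d_0| / ∏_{j≠i, j≥1} |d_j - d_i|`. -/
theorem stmt_4 (c : ℕ) (d : Fin (c + 1) → ℤ) (hd : StrictMono d)
    (β : Fin (c + 1) → ℚ) (hβ : ∀ i, 0 < β i)
    (hHK : ∀ k : ℕ, k < c → ∑ i : Fin (c + 1), (-1 : ℚ) ^ (i : ℕ) * β i * (d i : ℚ) ^ k = 0) :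
    ∀ i, β i = β 0 *
      (∏ j ∈ Finset.univ.filter (fun j => j ≠ i ∧ j ≠ 0), |(d j : ℚ) - (d 0 : ℚ)|) /
      (∏ j ∈ Finset.univ.filter (fun j => j ≠ i ∧ j ≠ 0), |(d j : ℚ) - (d i : ℚ)|) := by
  intro i
  have hprod : ∏ j ∈ univ.filter (fun j => j ≠ i ∧ j ≠ 0), |(d j : ℚ) - (d i : ℚ)| ≠ 0 :=
    prod_ne_zero_iff.mpr fun j hj => abs_ne_zero.mpr <| sub_ne_zero.mpr <| by
      exact_mod_cast hd.injective.ne (mem_filter.mp hj).2.1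
  rw [eq_div_iff hprod]
  rcases eq_or_ne i 0 with rfl | hi
  · rfl
  have hpair := mul_prod_sub_add_mul_prod_sub_eq_zero
    (fun m : Fin (c + 1) => (-1 : ℚ) ^ (m : ℕ) * β m) (fun m => (d m : ℚ)) (by simpa using hHK) hi
  have habs := congrArg abs (eq_neg_of_add_eq_zero_left hpair)
  simp only [abs_neg, abs_mul, abs_pow, abs_one, one_pow, one_mul, abs_prod,
    abs_of_pos (hβ _), Fin.val_zero] at habs
  simpa only [abs_sub_comm] using habs
end

section
/- Let a = b_1 + ... + b_n, and set w_1 = 0, w_i = b_1 + ... + b_{i-1} for i ≥ 2. For an integer l ∈ [0, a], the line bundle O(w_1 - l, ..., w_n - l) on ℙ^{b_1-1} × ... × ℙ^{b_n-1} has nonzero cohomology (in some degree) if and only if l ∈ {w_1, w_2, ..., w_n, a}. -/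
/-!
Let `S k` be the sum of the first `k` of the `b`'s; with `0`-based indices, as in `Fin n`,
`w_i = S i`, `S (i + 1) = w_i + b_i` and `a = S n`. The condition `w_i - l ∉ [-b_i + 1, -1]` says
exactly that `l` does not lie strictly inside `(w_i, w_i + b_i)`. The half-open intervals
`[S k, S (k + 1))` tile `[0, a)`, so this holds for every `i` precisely when `l` is one of the
endpoints `S 0, ..., S n`.
-/

open Finset

lemma exists_le_lt_succ_of_le_of_lt {α : Type*} [LinearOrder α] (f : ℕ → α) {l : α} :
    ∀ {n : ℕ}, f 0 ≤ l → l < f n → ∃ k < n, f k ≤ l ∧ l < f (k + 1)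
  | 0, h0, hn => absurd h0 (not_le.2 hn)
  | n + 1, h0, hn => by
    by_cases hl : l < f n
    · obtain ⟨k, hk, hkl⟩ := exists_le_lt_succ_of_le_of_lt f h0 hl
      exact ⟨k, by omega, hkl⟩
    · exact ⟨n, by omega, not_lt.1 hl, hn⟩

section PrefixSum

variable {n : ℕ} (b : Fin n → ℕ)

def prefixSum (k : ℕ) : ℤ :=
  ∑ j ∈ univ.filter (fun j : Fin n => (j : ℕ) < k), (b j : ℤ)

lemma prefixSum_monotone : Monotone (prefixSum b) := fun _ _ hkm =>
  sum_le_sum_of_subset_of_nonneg (monotone_filter_right _ fun _ _ hj => lt_of_lt_of_le hj hkm)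
    fun _ _ _ => Int.natCast_nonneg _

lemma prefixSum_zero : prefixSum b 0 = 0 := by
  simp [prefixSum]

lemma prefixSum_self : prefixSum b n = ∑ i, (b i : ℤ) := by
  simp [prefixSum]

lemma prefixSum_succ (i : Fin n) : prefixSum b (i + 1) = prefixSum b i + b i := by
  have : univ.filter (fun j : Fin n => (j : ℕ) < i + 1)
      = insert i (univ.filter fun j : Fin n => (j : ℕ) < i) := by
    ext j
    simp only [mem_filter, mem_univ, true_and, mem_insert, Fin.ext_iff]
    omega
  rw [prefixSum, this, sum_insert (by simp), add_comm]
  rfl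

lemma prefixSum_sub_prefixSum_notMem_Icc (k : ℕ) (i : Fin n) :
    prefixSum b i - prefixSum b k ∉ Icc (-(b i : ℤ) + 1) (-1) := by
  rw [mem_Icc]
  rcases lt_or_ge (i : ℕ) k with hik | hki
  · have := prefixSum_monotone b (Nat.succ_le_of_lt hik)
    rw [prefixSum_succ] at this
    omega
  · have := prefixSum_monotone b hki
    omega

lemma exists_eq_prefixSum_of_forall_notMem_Icc {l : ℤ} (hl0 : 0 ≤ l) (hln : l ≤ prefixSum b n)
    (H : ∀ i : Fin n, prefixSum b i - l ∉ Icc (-(b i : ℤ) + 1) (-1)) :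
    ∃ k ≤ n, l = prefixSum b k := by
  by_contra! hne
  obtain ⟨k, hk, hkl, hlk⟩ := exists_le_lt_succ_of_le_of_lt (prefixSum b)
    (by rwa [prefixSum_zero]) (lt_of_le_of_ne hln (hne n le_rfl))
  have hstep : prefixSum b (k + 1) = prefixSum b k + b ⟨k, hk⟩ := prefixSum_succ b ⟨k, hk⟩
  have hne_k := hne k hk.le
  have hkH := H ⟨k, hk⟩
  rw [Fin.val_mk, mem_Icc] at hkH
  omega

end PrefixSum

theorem stmt_12_general (n : ℕ) (b : Fin n → ℕ)
    (a : ℕ) (ha : a = ∑ i, b i) (w : Fin n → ℤ)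
    (hw : ∀ i, w i = ∑ j ∈ Finset.univ.filter (fun j => j < i), (b j : ℤ)) :
    ∀ l : ℤ, 0 ≤ l → l ≤ (a : ℤ) →
      ((∀ i, w i - l ∉ Finset.Icc (-(b i : ℤ) + 1) (-1)) ↔
        ((∃ i, l = w i) ∨ l = (a : ℤ))) := by
  have hw : w = fun i : Fin n => prefixSum b i := funext hw
  have ha : (a : ℤ) = prefixSum b n := by simp [ha, prefixSum_self]
  subst hw
  rw [ha]
  intro l hl0 hla
  constructor
  · intro H
    obtain ⟨k, hk, rfl⟩ := exists_eq_prefixSum_of_forall_notMem_Icc b hl0 hla H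
    rcases hk.lt_or_eq with hk | rfl
    · exact .inl ⟨⟨k, hk⟩, rfl⟩
    · exact .inr rfl
  · rintro (⟨j, rfl⟩ | rfl) i
    · exact prefixSum_sub_prefixSum_notMem_Icc b j i
    · exact prefixSum_sub_prefixSum_notMem_Icc b n i

/-- with `a = b_1 + ... + b_n` and balanced weights `w_1 = 0`,
`w_i = b_1 + ... + b_{i-1}`, for `l ∈ [0,a]` the line bundle `O(w_1 - l, ..., w_n - l)` has
nonzero cohomology iff `l ∈ {w_1, ..., w_n, a}`; combinatorially: for all `i`,
`w_i - l ∉ [-b_i+1, -1]` if and only if `l = w_i` for some `i`, or `l = a`. -/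
theorem stmt_12 (n : ℕ) (hn : 1 ≤ n) (b : Fin n → ℕ) (hb : ∀ i, 1 ≤ b i)
    (a : ℕ) (ha : a = ∑ i, b i) (w : Fin n → ℤ)
    (hw : ∀ i, w i = ∑ j ∈ Finset.univ.filter (fun j => j < i), (b j : ℤ)) :
    ∀ l : ℤ, 0 ≤ l → l ≤ (a : ℤ) →
      ((∀ i, w i - l ∉ Finset.Icc (-(b i : ℤ) + 1) (-1)) ↔
        ((∃ i, l = w i) ∨ l = (a : ℤ))) :=
  stmt_12_general n b a ha w hw
end

section
/- With a = Σ b_i and the balanced weights w as above, writing d = (d_0, ..., d_n) = (0, w_2, ..., w_n, a), the rank of the i-th term of the balanced tensor complex is β_i = C(a, d_i) · ∏_{j=1}^{i} C(d_i - d_j + b_j - 1, b_j - 1) · ∏_{j=i+1}^{n} C(d_{j-1} - d_i + b_j - 1, b_j - 1), where C denotes binomial coefficients; these ranks satisfy the Herzog–Kühl equations Σ_{i=0}^n (-1)^i β_i d_i^k = 0 for 0 ≤ k < n. -/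
/-!
Put `K = ∏ⱼ (bⱼ - 1)!`. Telescoping the identity `M! · C(M+k-1, k-1) (k-1)! (M+k) = (M+k)!`
over `j < i` and over `j ≥ i` gives `βᵢ · K · ∏_{j ≠ i} |dᵢ - dⱼ| = a!`, i.e.
`(-1)^i βᵢ = (-1)^n a! / (K ∏_{j ≠ i} (dᵢ - dⱼ))`. Hence the Herzog–Kühl sum is a multiple of
`Σᵢ dᵢ^k / ∏_{j ≠ i} (dᵢ - dⱼ)`, the coefficient of `X^n` in the Lagrange interpolant of `X^k`
at the `n + 1` distinct nodes `dᵢ`, which vanishes for `k < n`.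
-/

open Finset Polynomial Nat

theorem Lagrange.sum_pow_div_prod_sub_eq_zero {F ι : Type*} [Field F] [DecidableEq ι]
    {s : Finset ι} {v : ι → F} (hvs : Set.InjOn v s) {k : ℕ} (hk : k + 1 < #s) :
    ∑ i ∈ s, v i ^ k / ∏ j ∈ s.erase i, (v i - v j) = 0 := by
  have hdeg : (X ^ k : F[X]).degree < #s := by
    rw [degree_X_pow]; exact_mod_cast (by omega : k < #s)
  simpa [coeff_X_pow, show #s - 1 ≠ k by omega] using (Lagrange.coeff_eq_sum hvs hdeg).symm

theorem Nat.factorial_mul_choose_pred_mul_factorial_mul (M k : ℕ) (hk : 1 ≤ k) :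
    M ! * ((M + k - 1).choose (k - 1) * (k - 1)! * (M + k)) = (M + k)! := by
  obtain ⟨k, rfl⟩ := Nat.exists_eq_add_of_le' hk
  rw [Nat.add_sub_cancel, ← add_assoc, Nat.add_sub_cancel, factorial_succ,
    ← add_choose_mul_factorial_mul_factorial M k]
  ring

namespace Finset

variable {M : Type*} [CommMonoid M] {f g : ℕ → M} {l r : ℕ}

theorem mul_prod_Ico_eq_of_mul_eq_succ (hlr : l ≤ r)
    (h : ∀ m ∈ Ico l r, f m * g m = f (m + 1)) : f l * ∏ m ∈ Ico l r, g m = f r := by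
  induction r, hlr using Nat.le_induction with
  | base => simp
  | succ r hlr ih =>
    rw [prod_Ico_succ_top hlr, ← mul_assoc, ih fun m hm => h m (by simp at hm ⊢; omega),
      h r (by simp; omega)]

theorem mul_prod_Ico_eq_of_succ_mul_eq (hlr : l ≤ r)
    (h : ∀ m ∈ Ico l r, f (m + 1) * g m = f m) : f r * ∏ m ∈ Ico l r, g m = f l := by
  induction r, hlr using Nat.le_induction with
  | base => simp
  | succ r hlr ih =>
    rw [prod_Ico_succ_top hlr, mul_comm (∏ m ∈ Ico l r, g m), ← mul_assoc,
      h r (by simp; omega), ih fun m hm => h m (by simp at hm ⊢; omega)]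

end Finset

/-- The rank `βᵢ`, re-indexed from `0`: `S i` is `dᵢ` and `c m` is `b_{m+1}`, so that
`S (m + 1) = S m + c m`. -/
def balancedRank (c S : ℕ → ℕ) (n i : ℕ) : ℕ :=
  (S n).choose (S i) * ∏ m ∈ range n,
    if m < i then (S i - S (m + 1) + c m - 1).choose (c m - 1)
    else (S m - S i + c m - 1).choose (c m - 1)

section BalancedRank

variable {c S : ℕ → ℕ}

theorem strictMono_of_succ_eq_add (hc : ∀ m, 1 ≤ c m) (hS : ∀ m, S (m + 1) = S m + c m) :
    StrictMono S :=
  strictMono_nat_of_lt_succ fun m => by have := hc m; rw [hS]; omega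

theorem prod_range_choose_mul_factorial_mul_sub (hc : ∀ m, 1 ≤ c m)
    (hS : ∀ m, S (m + 1) = S m + c m) (hS0 : S 0 = 0) (i : ℕ) :
    ∏ m ∈ range i, ((S i - S (m + 1) + c m - 1).choose (c m - 1) * (c m - 1)! * (S i - S m))
      = (S i)! := by
  have := mul_prod_Ico_eq_of_succ_mul_eq (f := fun m => (S i - S m)!)
    (g := fun m => (S i - S (m + 1) + c m - 1).choose (c m - 1) * (c m - 1)! * (S i - S m))
    (Nat.zero_le i) fun m hm => by
      have hle : S (m + 1) ≤ S i :=
        (strictMono_of_succ_eq_add hc hS).monotone (by simp at hm; omega)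
      rw [show S i - S m = S i - S (m + 1) + c m by rw [hS] at hle ⊢; omega]
      exact factorial_mul_choose_pred_mul_factorial_mul _ _ (hc m)
  simpa [hS0, ← range_eq_Ico] using this

theorem prod_Ico_choose_mul_factorial_mul_sub (hc : ∀ m, 1 ≤ c m)
    (hS : ∀ m, S (m + 1) = S m + c m) {i n : ℕ} (hin : i ≤ n) :
    ∏ m ∈ Ico i n, ((S m - S i + c m - 1).choose (c m - 1) * (c m - 1)! * (S (m + 1) - S i))
      = (S n - S i)! := by
  have := mul_prod_Ico_eq_of_mul_eq_succ (f := fun m => (S m - S i)!)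
    (g := fun m => (S m - S i + c m - 1).choose (c m - 1) * (c m - 1)! * (S (m + 1) - S i))
    hin fun m hm => by
      have hle : S i ≤ S m := (strictMono_of_succ_eq_add hc hS).monotone (by simp at hm; omega)
      rw [show S (m + 1) - S i = S m - S i + c m by rw [hS]; omega]
      exact factorial_mul_choose_pred_mul_factorial_mul _ _ (hc m)
  simpa using this

theorem balancedRank_mul_prod_factorial_mul_prod_sub (hc : ∀ m, 1 ≤ c m)
    (hS : ∀ m, S (m + 1) = S m + c m) (hS0 : S 0 = 0) {i n : ℕ} (hin : i ≤ n) :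
    balancedRank c S n i * ((∏ m ∈ range n, (c m - 1)!) *
      ((∏ m ∈ range i, (S i - S m)) * ∏ m ∈ Ico i n, (S (m + 1) - S i))) = (S n)! := by
  have hlow := prod_range_choose_mul_factorial_mul_sub hc hS hS0 i
  have hup := prod_Ico_choose_mul_factorial_mul_sub hc hS hin
  simp only [prod_mul_distrib] at hlow hup
  have hlow' : ∏ m ∈ range i, (if m < i then (S i - S (m + 1) + c m - 1).choose (c m - 1)
      else (S m - S i + c m - 1).choose (c m - 1)) =
      ∏ m ∈ range i, (S i - S (m + 1) + c m - 1).choose (c m - 1) :=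
    prod_congr rfl fun m hm => if_pos (mem_range.mp hm)
  have hup' : ∏ m ∈ Ico i n, (if m < i then (S i - S (m + 1) + c m - 1).choose (c m - 1)
      else (S m - S i + c m - 1).choose (c m - 1)) =
      ∏ m ∈ Ico i n, (S m - S i + c m - 1).choose (c m - 1) :=
    prod_congr rfl fun m hm => if_neg (by simp at hm; omega)
  rw [balancedRank, ← prod_range_mul_prod_Ico _ hin, ← prod_range_mul_prod_Ico _ hin, hlow', hup',
    ← choose_mul_factorial_mul_factorial ((strictMono_of_succ_eq_add hc hS).monotone hin),
    ← hlow, ← hup]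
  ring

theorem prod_erase_sub_eq_neg_one_pow_mul_prod_sub (hS : Monotone S) {i n : ℕ} (hin : i ≤ n) :
    ∏ j ∈ (range (n + 1)).erase i, ((S i : ℚ) - S j) =
      (-1) ^ (n - i) * ((∏ m ∈ range i, (S i - S m)) * ∏ m ∈ Ico i n, (S (m + 1) - S i) : ℕ) := by
  have hsplit : (range (n + 1)).erase i = range i ∪ Ico (i + 1) (n + 1) := by
    ext j; simp; omega
  rw [hsplit, prod_union (disjoint_left.mpr fun j hj hj' => by simp at hj hj'; omega),
    ← prod_Ico_add', Nat.cast_mul, Nat.cast_prod, Nat.cast_prod, mul_left_comm, ← card_Ico i n,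
    ← prod_const, ← prod_mul_distrib]
  congr 1
  · refine prod_congr rfl fun m hm => ?_
    rw [Nat.cast_sub (hS (by simp at hm; omega))]
  · refine prod_congr rfl fun m hm => ?_
    rw [Nat.cast_sub (hS (by simp at hm; omega))]
    ring

theorem neg_one_pow_mul_balancedRank (hc : ∀ m, 1 ≤ c m) (hS : ∀ m, S (m + 1) = S m + c m)
    (hS0 : S 0 = 0) {i n : ℕ} (hin : i ≤ n) :
    (-1) ^ i * (balancedRank c S n i : ℚ) =
      (-1) ^ n * (S n)! / (∏ m ∈ range n, (c m - 1)! : ℕ) /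
        ∏ j ∈ (range (n + 1)).erase i, ((S i : ℚ) - S j) := by
  have hmono := strictMono_of_succ_eq_add hc hS
  have hgaps : (∏ m ∈ range i, (S i - S m)) * ∏ m ∈ Ico i n, (S (m + 1) - S i) ≠ 0 := by
    refine mul_ne_zero (prod_ne_zero_iff.mpr fun m hm => ?_) (prod_ne_zero_iff.mpr fun m hm => ?_)
    · have := hmono (mem_range.mp hm); omega
    · have := hmono (show i < m + 1 by simp at hm; omega); omega
  have hK : ∏ m ∈ range n, (c m - 1)! ≠ 0 := prod_ne_zero_iff.mpr fun m _ => factorial_ne_zero _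
  have hsign : (-1 : ℚ) ^ n = (-1) ^ i * (-1) ^ (n - i) := by rw [← pow_add]; congr 1; omega
  rw [prod_erase_sub_eq_neg_one_pow_mul_prod_sub hmono.monotone hin,
    ← balancedRank_mul_prod_factorial_mul_prod_sub hc hS hS0 hin, hsign]
  field_simp [(Nat.cast_ne_zero (R := ℚ)).mpr hgaps, (Nat.cast_ne_zero (R := ℚ)).mpr hK]
  push_cast
  ring

theorem sum_neg_one_pow_mul_balancedRank_mul_pow_eq_zero (hc : ∀ m, 1 ≤ c m)
    (hS : ∀ m, S (m + 1) = S m + c m) (hS0 : S 0 = 0) {n k : ℕ} (hk : k < n) :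
    ∑ i ∈ range (n + 1), (-1) ^ i * (balancedRank c S n i : ℚ) * (S i : ℚ) ^ k = 0 := by
  have hinj : Set.InjOn (fun j => (S j : ℚ)) (range (n + 1)) :=
    fun _ _ _ _ h => (strictMono_of_succ_eq_add hc hS).injective (Nat.cast_injective h)
  calc ∑ i ∈ range (n + 1), (-1) ^ i * (balancedRank c S n i : ℚ) * (S i : ℚ) ^ k
      = (-1) ^ n * (S n)! / (∏ m ∈ range n, (c m - 1)! : ℕ) *
          ∑ i ∈ range (n + 1),
            (S i : ℚ) ^ k / ∏ j ∈ (range (n + 1)).erase i, ((S i : ℚ) - S j) := by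
        rw [mul_sum]
        refine sum_congr rfl fun i hi => ?_
        rw [neg_one_pow_mul_balancedRank hc hS hS0 (by simp at hi; omega)]
        ring
    _ = 0 := by
        rw [Lagrange.sum_pow_div_prod_sub_eq_zero hinj (by simpa using hk), mul_zero]

end BalancedRank

theorem stmt_13_general (n : ℕ) (b : Fin n → ℕ) (hb : ∀ j, 1 ≤ b j)
    (a : ℕ) (ha : a = ∑ j, b j)
    (d : Fin (n + 1) → ℕ)
    (hd : ∀ i, d i = ∑ j ∈ Finset.univ.filter (fun j : Fin n => (j : ℕ) < (i : ℕ)), b j)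
    (β : Fin (n + 1) → ℕ)
    (hβ : ∀ i, β i = Nat.choose a (d i) *
      ∏ j : Fin n, (if (j : ℕ) < (i : ℕ)
        then Nat.choose (d i - d j.succ + b j - 1) (b j - 1)
        else Nat.choose (d j.castSucc - d i + b j - 1) (b j - 1))) :
    ∀ k : ℕ, k < n →
      ∑ i : Fin (n + 1), (-1 : ℚ) ^ (i : ℕ) * (β i : ℚ) * (d i : ℚ) ^ k = 0 := by
  intro k hk
  set c : ℕ → ℕ := fun m => if h : m < n then b ⟨m, h⟩ else 1
  set S : ℕ → ℕ := fun m => ∑ j ∈ range m, c j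
  have hc : ∀ m, 1 ≤ c m := fun m => by by_cases h : m < n <;> simp [c, h, hb]
  have hcb : ∀ j : Fin n, c j = b j := fun j => by simp [c]
  have hdS : ∀ i : Fin (n + 1), d i = S i := fun i => by
    have hrange : (range n).filter (· < (i : ℕ)) = range i := by
      ext m; simp; omega
    rw [hd, sum_filter, show S i = ∑ m ∈ range i, c m from rfl, ← hrange, sum_filter,
      ← Fin.sum_univ_eq_sum_range (fun m => if m < (i : ℕ) then c m else 0)]
    simp only [hcb]
  have haS : a = S n := by
    rw [ha, show S n = ∑ m ∈ range n, c m from rfl, ← Fin.sum_univ_eq_sum_range]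
    simp only [hcb]
  have hβS : ∀ i : Fin (n + 1), β i = balancedRank c S n i := fun i => by
    rw [hβ, balancedRank, haS, ← Fin.prod_univ_eq_prod_range]
    simp only [hdS, Fin.val_succ, Fin.val_castSucc, hcb]
  simp only [hβS, hdS]
  rw [Fin.sum_univ_eq_sum_range
    (fun i => (-1 : ℚ) ^ i * (balancedRank c S n i : ℚ) * (S i : ℚ) ^ k)]
  exact sum_neg_one_pow_mul_balancedRank_mul_pow_eq_zero hc (fun m => sum_range_succ c m) rfl hk

/-- for the balanced tensor complex with `a = Σ b_j` and degree sequence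
`d_i = b_1 + ... + b_i`, the rank of the `i`-th term is
`β_i = C(a, d_i) · ∏_{j≤i} C(d_i - d_j + b_j - 1, b_j - 1) · ∏_{j>i} C(d_{j-1} - d_i + b_j - 1, b_j - 1)`,
and these ranks satisfy the Herzog–Kühl equations `Σ_i (-1)^i β_i d_i^k = 0` for `0 ≤ k < n`. -/
theorem stmt_13 (n : ℕ) (hn : 1 ≤ n) (b : Fin n → ℕ) (hb : ∀ j, 1 ≤ b j)
    (a : ℕ) (ha : a = ∑ j, b j)
    (d : Fin (n + 1) → ℕ)
    (hd : ∀ i, d i = ∑ j ∈ Finset.univ.filter (fun j : Fin n => (j : ℕ) < (i : ℕ)), b j)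
    (β : Fin (n + 1) → ℕ)
    (hβ : ∀ i, β i = Nat.choose a (d i) *
      ∏ j : Fin n, (if (j : ℕ) < (i : ℕ)
        then Nat.choose (d i - d j.succ + b j - 1) (b j - 1)
        else Nat.choose (d j.castSucc - d i + b j - 1) (b j - 1))) :
    ∀ k : ℕ, k < n →
      ∑ i : Fin (n + 1), (-1 : ℚ) ^ (i : ℕ) * (β i : ℚ) * (d i : ℚ) ^ k = 0 :=
  stmt_13_general n b hb a ha d hd β hβ
end
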